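/- Let G be a locally finite connected weighted graph, x₀ ∈ X, ρ(x) = d(x,x₀) the combinatorial distance, and κ(r) = min_{y ∈ S_r} max_{x ∈ S_{r−1}, x ∼ y} κ(x,y) the sphere curvature (κ(0) = 0). Then for all x ∈ X: ℒρ(x) ≥ ∑_{j=1}^{ρ(x)} κ(j) − Deg(x₀). -/

import Mathlib

noncomputable def lap {X : Type*} (b : X → X → ℝ) (m : X → ℝ) (f : X → ℝ) (x : X) : ℝ :=
  (1 / m x) * ∑' y, b x y * (f x - f y)

noncomputable def deg {X : Type*} (b : X → X → ℝ) (m : X → ℝ) (x : X) : ℝ :=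
  (1 / m x) * ∑' y, b x y

def HasPathLen {X : Type*} (b : X → X → ℝ) (x y : X) (n : ℕ) : Prop :=
  ∃ p : ℕ → X, p 0 = x ∧ p n = y ∧ ∀ i < n, 0 < b (p i) (p (i + 1))

noncomputable def cdist {X : Type*} (b : X → X → ℝ) (x y : X) : ℕ :=
  sInf {n | HasPathLen b x y n}

def Lip1 {X : Type*} (b : X → X → ℝ) (f : X → ℝ) : Prop :=
  ∀ x y, |f x - f y| ≤ (cdist b x y : ℝ)

/-- Ollivier Ricci curvature via the dual formula. -/
noncomputable def kappa {X : Type*} (b : X → X → ℝ) (m : X → ℝ) (x y : X) : ℝ :=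
  sInf {t : ℝ | ∃ f : X → ℝ, Lip1 b f ∧ (f x - f y) / (cdist b x y : ℝ) = 1 ∧
    t = (lap b m f x - lap b m f y) / (cdist b x y : ℝ)}

/-- The sphere curvature `κ(r) = min_{y ∈ S_r} max_{x ∈ S_{r−1}, x∼y} κ(x,y)`, with
`κ(0) = 0`. -/
noncomputable def sphereCurv {X : Type*} (b : X → X → ℝ) (m : X → ℝ) (x₀ : X) (r : ℕ) : ℝ :=
  if r = 0 then 0 else
    sInf {t : ℝ | ∃ y, cdist b x₀ y = r ∧
      t = sSup {s : ℝ | ∃ x, cdist b x₀ x = r - 1 ∧ 0 < b x y ∧ s = kappa b m x y}}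

/-!
The distance `ρ = d(·, x₀)` is 1-Lipschitz and drops by exactly one along an edge from `y ∈ S_r`
to a neighbour `x ∈ S_{r-1}`, so `-ρ` is admissible in the dual formula for `κ(x, y)`, which gives
`κ(x, y) ≤ ℒρ(y) - ℒρ(x)`. Choosing `x` to realise the maximum in `κ(r)` and inducting on `r`,
starting from `ℒρ(x₀) ≥ -Deg(x₀)` (again because `ρ` is 1-Lipschitz), yields the comparison.
Spheres are finite by local finiteness, so the minimum and maximum in `κ(r)` are attained.
-/

section Distance

variable {X : Type*} {b : X → X → ℝ}

lemma hasPathLen_one {x y : X} (h : 0 < b x y) : HasPathLen b x y 1 :=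
  ⟨fun i => if i = 0 then x else y, rfl, rfl, fun i hi => by
    obtain rfl : i = 0 := by omega
    simpa using h⟩

lemma HasPathLen.trans {x y z : X} {n k : ℕ} (hxy : HasPathLen b x y n)
    (hyz : HasPathLen b y z k) : HasPathLen b x z (n + k) := by
  obtain ⟨p, rfl, rfl, hp⟩ := hxy
  obtain ⟨q, hq0, rfl, hq⟩ := hyz
  refine ⟨fun i => if i ≤ n then p i else q (i - n), by simp, ?_, fun i hi => ?_⟩
  · rcases k.eq_zero_or_pos with rfl | hk
    · simp [hq0]
    · simp [show ¬ n + k ≤ n by omega]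
  · by_cases hin : i + 1 ≤ n
    · simpa [hin, show i ≤ n by omega] using hp i hin
    · have hq' := hq (i - n) (by omega)
      rw [show i - n + 1 = i + 1 - n by omega] at hq'
      rcases (show i = n ∨ n < i by omega) with rfl | hni
      · simpa [hq0] using hq'
      · simpa [hin, show ¬ i ≤ n by omega] using hq'

lemma HasPathLen.symm (hb_symm : ∀ x y, b x y = b y x) {x y : X} {n : ℕ}
    (h : HasPathLen b x y n) : HasPathLen b y x n := by
  obtain ⟨p, rfl, rfl, hp⟩ := h
  refine ⟨fun i => p (n - i), by simp, by simp, fun i hi => ?_⟩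
  show 0 < b (p (n - i)) (p (n - (i + 1)))
  rw [hb_symm, show n - i = n - (i + 1) + 1 by omega]
  exact hp _ (by omega)

lemma cdist_le {x y : X} {n : ℕ} (h : HasPathLen b x y n) : cdist b x y ≤ n :=
  Nat.sInf_le h

variable (hconn : ∀ x y : X, ∃ n, HasPathLen b x y n)
include hconn

lemma hasPathLen_cdist (x y : X) : HasPathLen b x y (cdist b x y) :=
  Nat.sInf_mem (hconn x y)

lemma cdist_triangle (x y z : X) : cdist b x z ≤ cdist b x y + cdist b y z :=
  cdist_le ((hasPathLen_cdist hconn x y).trans (hasPathLen_cdist hconn y z))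

lemma cdist_comm (hb_symm : ∀ x y, b x y = b y x) (x y : X) : cdist b x y = cdist b y x :=
  le_antisymm (cdist_le ((hasPathLen_cdist hconn y x).symm hb_symm))
    (cdist_le ((hasPathLen_cdist hconn x y).symm hb_symm))

lemma eq_of_cdist_eq_zero {x y : X} (h : cdist b x y = 0) : x = y := by
  obtain ⟨p, rfl, hp, -⟩ := hasPathLen_cdist hconn x y
  rwa [h] at hp

lemma cdist_eq_one_of_pos {x y : X} (hxy : 0 < b x y) (hne : x ≠ y) : cdist b x y = 1 := by
  have := cdist_le (hasPathLen_one hxy)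
  have := mt (eq_of_cdist_eq_zero hconn) hne
  omega

lemma exists_pos_of_cdist_eq_succ {x₀ y : X} {r : ℕ} (hy : cdist b x₀ y = r + 1) :
    ∃ x, cdist b x₀ x = r ∧ 0 < b x y := by
  obtain ⟨p, hp0, hpy, hp⟩ := hasPathLen_cdist hconn x₀ y
  rw [hy] at hpy hp
  have hpr : 0 < b (p r) y := hpy ▸ hp r (by omega)
  have hle : cdist b x₀ (p r) ≤ r := cdist_le ⟨p, hp0, rfl, fun i hi => hp i (by omega)⟩
  have hge := (cdist_triangle hconn x₀ (p r) y).trans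
    (Nat.add_le_add_left (cdist_le (hasPathLen_one hpr)) _)
  exact ⟨p r, by omega, hpr⟩

lemma finite_setOf_cdist_eq (hloc : ∀ x : X, {y | 0 < b x y}.Finite) (x₀ : X) (r : ℕ) :
    {x | cdist b x₀ x = r}.Finite := by
  induction r with
  | zero => exact (Set.finite_singleton x₀).subset fun x hx => (eq_of_cdist_eq_zero hconn hx).symm
  | succ r ih =>
    refine (ih.biUnion fun x _ => hloc x).subset fun y hy => ?_
    obtain ⟨x, hx, hxy⟩ := exists_pos_of_cdist_eq_succ hconn hy
    exact Set.mem_biUnion hx hxy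

lemma lip1_cdist (hb_symm : ∀ x y, b x y = b y x) (x₀ : X) :
    Lip1 b fun z => (cdist b x₀ z : ℝ) := by
  intro x y
  have hxy : cdist b x₀ x ≤ cdist b x₀ y + cdist b x y :=
    cdist_comm hconn hb_symm x y ▸ cdist_triangle hconn x₀ y x
  have hyx : cdist b x₀ y ≤ cdist b x₀ x + cdist b x y := cdist_triangle hconn x₀ x y
  dsimp only
  rw [abs_sub_le_iff, sub_le_iff_le_add', sub_le_iff_le_add']
  exact ⟨by exact_mod_cast hxy, by exact_mod_cast hyx⟩

end Distance

lemma bddBelow_setOf_exists_eq_apply {α : Type*} {p : α → Prop} (hp : {a | p a}.Finite)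
    (g : α → ℝ) : BddBelow {t | ∃ a, p a ∧ t = g a} :=
  ((hp.image g).subset fun _ ⟨a, ha, h⟩ => ⟨a, ha, h.symm⟩ :
    {t | ∃ a, p a ∧ t = g a}.Finite).bddBelow

section Curvature

variable {X : Type*} {b : X → X → ℝ} {m : X → ℝ}

lemma Lip1.neg {f : X → ℝ} (hf : Lip1 b f) : Lip1 b (-f) := fun x y => by
  rw [Pi.neg_apply, Pi.neg_apply, neg_sub_neg, abs_sub_comm]
  exact hf x y

lemma Lip1.abs_sub_le_one {f : X → ℝ} (hf : Lip1 b f) {x y : X} (hxy : 0 < b x y) :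
    |f x - f y| ≤ 1 :=
  (hf x y).trans (by exact_mod_cast cdist_le (hasPathLen_one hxy))

lemma lap_neg (f : X → ℝ) (x : X) : lap b m (-f) x = -lap b m f x := by
  simp only [lap, Pi.neg_apply, neg_sub_neg, ← neg_sub (f x), mul_neg, tsum_neg]

lemma tsum_mul_eq_sum (hb_nonneg : ∀ x y, 0 ≤ b x y) (hloc : ∀ x : X, {y | 0 < b x y}.Finite)
    (g : X → ℝ) (x : X) : ∑' y, b x y * g y = ∑ y ∈ (hloc x).toFinset, b x y * g y :=
  tsum_eq_sum fun y hy => by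
    rw [← (hb_nonneg x y).antisymm (by simpa using hy), zero_mul]

lemma abs_lap_le_deg (hb_nonneg : ∀ x y, 0 ≤ b x y) (hloc : ∀ x : X, {y | 0 < b x y}.Finite)
    (hm : ∀ x, 0 < m x) {f : X → ℝ} (hf : Lip1 b f) (x : X) : |lap b m f x| ≤ deg b m x := by
  have hterm : ∀ y ∈ (hloc x).toFinset, |b x y * (f x - f y)| ≤ b x y * 1 := fun y hy => by
    have hxy : 0 < b x y := by simpa using hy
    rw [abs_mul, abs_of_pos hxy]
    exact mul_le_mul_of_nonneg_left (hf.abs_sub_le_one hxy) hxy.le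
  have hdeg : ∑' y, b x y = ∑' y, b x y * 1 := by simp
  rw [lap, deg, abs_mul, abs_of_pos (one_div_pos.2 (hm x)), hdeg,
    tsum_mul_eq_sum hb_nonneg hloc, tsum_mul_eq_sum hb_nonneg hloc]
  refine mul_le_mul_of_nonneg_left ?_ (one_div_pos.2 (hm x)).le
  exact (Finset.abs_sum_le_sum_abs _ _).trans (Finset.sum_le_sum hterm)

lemma kappa_le (hb_nonneg : ∀ x y, 0 ≤ b x y) (hloc : ∀ x : X, {y | 0 < b x y}.Finite)
    (hm : ∀ x, 0 < m x) {f : X → ℝ} (hf : Lip1 b f) {x y : X}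
    (hfxy : (f x - f y) / (cdist b x y : ℝ) = 1) :
    kappa b m x y ≤ (lap b m f x - lap b m f y) / (cdist b x y : ℝ) := by
  refine csInf_le ⟨-(deg b m x + deg b m y) / (cdist b x y : ℝ), ?_⟩ ⟨f, hf, hfxy, rfl⟩
  rintro _ ⟨g, hg, -, rfl⟩
  have hx := abs_le.1 (abs_lap_le_deg hb_nonneg hloc hm hg x)
  have hy := abs_le.1 (abs_lap_le_deg hb_nonneg hloc hm hg y)
  gcongr
  linarith [hx.1, hy.2]

lemma kappa_le_lap_cdist_sub (hb_symm : ∀ x y, b x y = b y x)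
    (hb_nonneg : ∀ x y, 0 ≤ b x y) (hloc : ∀ x : X, {y | 0 < b x y}.Finite)
    (hm : ∀ x, 0 < m x) (hconn : ∀ x y : X, ∃ n, HasPathLen b x y n) {x₀ x y : X}
    (hxy : 0 < b x y) (hρ : cdist b x₀ y = cdist b x₀ x + 1) :
    kappa b m x y ≤
      lap b m (fun z => (cdist b x₀ z : ℝ)) y - lap b m (fun z => (cdist b x₀ z : ℝ)) x := by
  have hne : x ≠ y := by rintro rfl; omega
  have hd := cdist_eq_one_of_pos hconn hxy hne
  have h := kappa_le (m := m) (x := x) (y := y) hb_nonneg hloc hm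
    (lip1_cdist hconn hb_symm x₀).neg (by simp [hd, hρ])
  rw [lap_neg, lap_neg, hd] at h
  linarith

lemma sphereCurv_succ_le_kappa (hloc : ∀ x : X, {y | 0 < b x y}.Finite)
    (hconn : ∀ x y : X, ∃ n, HasPathLen b x y n) {x₀ y : X} {r : ℕ}
    (hy : cdist b x₀ y = r + 1) :
    ∃ x, cdist b x₀ x = r ∧ 0 < b x y ∧ sphereCurv b m x₀ (r + 1) ≤ kappa b m x y := by
  set S := {s : ℝ | ∃ x, cdist b x₀ x = r + 1 - 1 ∧ 0 < b x y ∧ s = kappa b m x y}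
  have hS : S.Finite := ((finite_setOf_cdist_eq hconn hloc x₀ r).image (kappa b m · y)).subset
    (by rintro _ ⟨x, hx, -, rfl⟩; exact ⟨x, hx, rfl⟩)
  obtain ⟨x, hx, hxy⟩ := exists_pos_of_cdist_eq_succ hconn hy
  obtain ⟨x', hx', hx'y, hmax⟩ := Set.Nonempty.csSup_mem (by exact ⟨_, x, hx, hxy, rfl⟩) hS
  refine ⟨x', hx', hx'y, ?_⟩
  rw [sphereCurv, if_neg r.succ_ne_zero, ← hmax]
  exact csInf_le (bddBelow_setOf_exists_eq_apply (finite_setOf_cdist_eq hconn hloc x₀ (r + 1)) _)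
    ⟨y, hy, rfl⟩

end Curvature

theorem laplacian_comparison_general {X : Type*} (b : X → X → ℝ) (m : X → ℝ)
    (hb_symm : ∀ x y, b x y = b y x) (hb_nonneg : ∀ x y, 0 ≤ b x y)
    (hm : ∀ x, 0 < m x)
    (hloc : ∀ x : X, {y | 0 < b x y}.Finite)
    (hconn : ∀ x y : X, ∃ n, HasPathLen b x y n)
    (x₀ : X) :
    ∀ x : X,
      (∑ j ∈ Finset.Icc 1 (cdist b x₀ x), sphereCurv b m x₀ j) - deg b m x₀ ≤
        lap b m (fun z => (cdist b x₀ z : ℝ)) x := by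
  suffices h : ∀ r x, cdist b x₀ x = r →
      (∑ j ∈ Finset.Icc 1 r, sphereCurv b m x₀ j) - deg b m x₀ ≤
        lap b m (fun z => (cdist b x₀ z : ℝ)) x from fun x => h _ x rfl
  intro r
  induction r with
  | zero =>
    intro x hx
    obtain rfl := eq_of_cdist_eq_zero hconn hx
    simpa using neg_le_of_abs_le
      (abs_lap_le_deg hb_nonneg hloc hm (lip1_cdist hconn hb_symm x₀) x₀)
  | succ r ih =>
    intro y hy
    obtain ⟨x, hx, hxy, hκ⟩ := sphereCurv_succ_le_kappa (m := m) hloc hconn hy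
    have hstep := kappa_le_lap_cdist_sub hb_symm hb_nonneg hloc hm hconn hxy (by rw [hy, hx])
    rw [Finset.sum_Icc_succ_top (by omega)]
    linarith [ih x hx]

/-- Laplacian comparison: `ℒρ(x) ≥ ∑_{j=1}^{ρ(x)} κ(j) − Deg(x₀)` where `ρ = d(·,x₀)`. -/
theorem laplacian_comparison {X : Type*} (b : X → X → ℝ) (m : X → ℝ)
    (hb_symm : ∀ x y, b x y = b y x) (hb_nonneg : ∀ x y, 0 ≤ b x y)
    (hb_diag : ∀ x, b x x = 0) (hb_sum : ∀ x, Summable fun y => b x y)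
    (hm : ∀ x, 0 < m x)
    (hloc : ∀ x : X, {y | 0 < b x y}.Finite)
    (hconn : ∀ x y : X, ∃ n, HasPathLen b x y n)
    (x₀ : X) :
    ∀ x : X,
      (∑ j ∈ Finset.Icc 1 (cdist b x₀ x), sphereCurv b m x₀ j) - deg b m x₀ ≤
        lap b m (fun z => (cdist b x₀ z : ℝ)) x :=
  laplacian_comparison_general b m hb_symm hb_nonneg hm hloc hconn x₀
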